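/- arXiv:2506.14633 — 2 statements merged into one kernel-verified Lean document; each statement's English description precedes it below -/
import Mathlib

section
/- There exist constants b₃ > 0 and C > 0 such that, for all sufficiently large x, the number of positive integers n ≤ x with ω(ψ(n)) > b₃·(log log x)² is at most C·x/log x, where ω(m) denotes the number of distinct prime factors of m. -/
/-!
Since `ψ(n)` divides `n ∏_{p ∣ n} (p + 1)`, we have `ω(ψ(n)) ≤ ω(n) + ∑_{p ∣ n} ω(p + 1)`, so
`ω(ψ(n)) > t + t²` forces either `ω(n) > t` or a prime `p ∣ n` with `ω(p + 1) > t`.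
Rankin's trick, with `2^ω(m) ≤ d(m)` and `∑_{m ≤ N} d(m)/m ≤ (1 + log N)²`, bounds the sum of `1/m`
over `m ≤ N` with `ω(m) > t` by `(1 + log N)² / 2^t`; so both kinds of `n ≤ N` number
`O(N (log N)² / 2^t)`. Taking `t = 5 log log x` makes `2^t ≥ (log x)³`.
-/

open Filter Real

/-- Dedekind's arithmetic function `ψ(n) = n ∏_{p ∣ n} (1 + 1/p)`. -/
def dedekindPsi (n : ℕ) : ℕ :=
  n * (∏ p ∈ n.primeFactors, (p + 1)) / ∏ p ∈ n.primeFactors, p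

open Finset

lemma sum_Ioc_inv_le_one_add_log (N : ℕ) : ∑ n ∈ Ioc 0 N, (n : ℝ)⁻¹ ≤ 1 + log N := by
  simpa [harmonic_eq_sum_Icc, ← Icc_add_one_left_eq_Ioc] using harmonic_le_one_add_log N

lemma two_pow_card_primeFactors_le_card_divisors {n : ℕ} (hn : n ≠ 0) :
    2 ^ #n.primeFactors ≤ #n.divisors := by
  rw [Nat.card_divisors hn, ← prod_const]
  refine prod_le_prod' fun p hp => ?_
  have : n.factorization p ≠ 0 := by
    rwa [← Finsupp.mem_support_iff, Nat.support_factorization]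
  omega

lemma sum_Ioc_card_divisors_div_le (N : ℕ) :
    ∑ n ∈ Ioc 0 N, (#n.divisors : ℝ) / n ≤ (1 + log N) ^ 2 := by
  let f : ArithmeticFunction ℝ := ⟨fun n => (n : ℝ)⁻¹, by simp⟩
  have hf (n : ℕ) : f n = (n : ℝ)⁻¹ := rfl
  have hff (n : ℕ) : (f * f) n = #n.divisors / n := by
    rw [ArithmeticFunction.mul_apply, Nat.sum_divisorsAntidiagonal (fun a b => f a * f b),
      div_eq_mul_inv, ← nsmul_eq_mul, ← sum_const]
    refine sum_congr rfl fun d hd => ?_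
    rw [hf, hf, ← mul_inv, ← Nat.cast_mul, Nat.mul_div_cancel' (Nat.dvd_of_mem_divisors hd)]
  calc ∑ n ∈ Ioc 0 N, (#n.divisors : ℝ) / n = ∑ n ∈ Ioc 0 N, (f * f) n := by simp only [hff]
    _ = ∑ x ∈ Ioc 0 N ×ˢ Ioc 0 N with x.1 * x.2 ≤ N, f x.1 * f x.2 :=
      ArithmeticFunction.sum_Ioc_mul_eq_sum_prod_filter f f N
    _ ≤ ∑ x ∈ Ioc 0 N ×ˢ Ioc 0 N, f x.1 * f x.2 :=
      sum_le_sum_of_subset_of_nonneg (filter_subset _ _) fun _ _ _ => by simp only [hf]; positivity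
    _ = (∑ n ∈ Ioc 0 N, (n : ℝ)⁻¹) ^ 2 := by simp only [hf, sq, sum_mul_sum, sum_product]
    _ ≤ (1 + log N) ^ 2 :=
      pow_le_pow_left₀ (sum_nonneg fun _ _ => by positivity) (sum_Ioc_inv_le_one_add_log N) 2

lemma sum_Ioc_inv_filter_lt_card_primeFactors_le (N : ℕ) (t : ℝ) :
    ∑ n ∈ Ioc 0 N with t < #n.primeFactors, (n : ℝ)⁻¹ ≤ (1 + log N) ^ 2 / 2 ^ t := by
  have h2t : (0 : ℝ) < 2 ^ t := by positivity
  calc ∑ n ∈ Ioc 0 N with t < #n.primeFactors, (n : ℝ)⁻¹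
      ≤ ∑ n ∈ Ioc 0 N with t < #n.primeFactors, (#n.divisors : ℝ) / n / 2 ^ t := by
        refine sum_le_sum fun n hn => ?_
        obtain ⟨hnN, ht⟩ := mem_filter.mp hn
        have hn0 : n ≠ 0 := (mem_Ioc.mp hnN).1.ne'
        have h2d : (2 : ℝ) ^ t ≤ #n.divisors :=
          calc (2 : ℝ) ^ t ≤ 2 ^ (#n.primeFactors : ℝ) :=
                rpow_le_rpow_of_exponent_le one_le_two ht.le
            _ = ((2 ^ #n.primeFactors : ℕ) : ℝ) := by norm_cast
            _ ≤ #n.divisors := by exact_mod_cast two_pow_card_primeFactors_le_card_divisors hn0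
        rw [le_div_iff₀ h2t, inv_mul_eq_div]
        exact div_le_div_of_nonneg_right h2d n.cast_nonneg
    _ ≤ ∑ n ∈ Ioc 0 N, (#n.divisors : ℝ) / n / 2 ^ t :=
        sum_le_sum_of_subset_of_nonneg (filter_subset _ _) fun _ _ _ => by positivity
    _ ≤ (1 + log N) ^ 2 / 2 ^ t := by
        rw [← sum_div]
        exact div_le_div_of_nonneg_right (sum_Ioc_card_divisors_div_le N) h2t.le

lemma sum_Ioc_filter_inv_le_two_mul_sum_succ (N : ℕ) (P : ℕ → Prop) [DecidablePred P] :
    ∑ p ∈ Ioc 0 N with P (p + 1), (p : ℝ)⁻¹ ≤ 2 * ∑ m ∈ Ioc 0 (N + 1) with P m, (m : ℝ)⁻¹ := by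
  calc ∑ p ∈ Ioc 0 N with P (p + 1), (p : ℝ)⁻¹
      ≤ ∑ p ∈ Ioc 0 N with P (p + 1), 2 * ((p + 1 : ℕ) : ℝ)⁻¹ := by
        refine sum_le_sum fun p hp => ?_
        have hp1 : (1 : ℝ) ≤ p := by exact_mod_cast (mem_Ioc.mp (mem_filter.mp hp).1).1
        rw [← div_eq_mul_inv, inv_eq_one_div, div_le_div_iff₀ (by positivity) (by positivity)]
        push_cast
        linarith
    _ = 2 * ∑ m ∈ {p ∈ Ioc 0 N | P (p + 1)}.map (addRightEmbedding 1), (m : ℝ)⁻¹ := by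
        rw [sum_map, mul_sum]
        rfl
    _ ≤ 2 * ∑ m ∈ Ioc 0 (N + 1) with P m, (m : ℝ)⁻¹ := by
        refine mul_le_mul_of_nonneg_left
          (sum_le_sum_of_subset_of_nonneg ?_ fun _ _ _ => by positivity) two_pos.le
        intro m hm
        simp only [Finset.mem_map, mem_filter, mem_Ioc, addRightEmbedding_apply] at hm ⊢
        obtain ⟨p, ⟨⟨hp0, hpN⟩, hPp⟩, rfl⟩ := hm
        exact ⟨⟨by omega, by omega⟩, hPp⟩

lemma card_filter_exists_dvd_le (N : ℕ) (P : Finset ℕ) :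
    (#{n ∈ Ioc 0 N | ∃ p ∈ P, p ∣ n} : ℝ) ≤ N * ∑ p ∈ P, (p : ℝ)⁻¹ := by
  have hsub : {n ∈ Ioc 0 N | ∃ p ∈ P, p ∣ n} ⊆ P.biUnion fun p => {n ∈ Ioc 0 N | p ∣ n} := by
    intro n hn
    obtain ⟨hnN, p, hp, hpn⟩ := mem_filter.mp hn
    exact mem_biUnion.mpr ⟨p, hp, mem_filter.mpr ⟨hnN, hpn⟩⟩
  calc (#{n ∈ Ioc 0 N | ∃ p ∈ P, p ∣ n} : ℝ)
      ≤ ∑ p ∈ P, (#{n ∈ Ioc 0 N | p ∣ n} : ℝ) := by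
        exact_mod_cast (card_le_card hsub).trans card_biUnion_le
    _ ≤ ∑ p ∈ P, (N : ℝ) / p := by
        refine sum_le_sum fun p _ => ?_
        rw [Nat.Ioc_filter_dvd_card_eq_div]
        exact Nat.cast_div_le
    _ = N * ∑ p ∈ P, (p : ℝ)⁻¹ := by simp only [mul_sum, div_eq_mul_inv]

lemma card_primeFactors_mul_le (a b : ℕ) :
    #(a * b).primeFactors ≤ #a.primeFactors + #b.primeFactors := by
  rcases eq_or_ne a 0 with rfl | ha
  · simp
  rcases eq_or_ne b 0 with rfl | hb
  · simp
  rw [Nat.primeFactors_mul ha hb]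
  exact card_union_le _ _

lemma card_primeFactors_prod_le {ι : Type*} (s : Finset ι) (f : ι → ℕ) :
    #(∏ i ∈ s, f i).primeFactors ≤ ∑ i ∈ s, #(f i).primeFactors := by
  induction s using Finset.cons_induction with
  | empty => simp
  | cons i s hi ih =>
    rw [prod_cons, sum_cons]
    exact (card_primeFactors_mul_le _ _).trans (Nat.add_le_add_left ih _)

lemma dedekindPsi_dvd (n : ℕ) : dedekindPsi n ∣ n * ∏ p ∈ n.primeFactors, (p + 1) :=
  Nat.div_dvd_of_dvd (dvd_mul_of_dvd_left (Nat.prod_primeFactors_dvd n) _)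

lemma card_primeFactors_dedekindPsi_le (n : ℕ) :
    #(dedekindPsi n).primeFactors
      ≤ #n.primeFactors + ∑ p ∈ n.primeFactors, #(p + 1).primeFactors := by
  rcases eq_or_ne n 0 with rfl | hn
  · simp [dedekindPsi]
  have hne : n * ∏ p ∈ n.primeFactors, (p + 1) ≠ 0 :=
    mul_ne_zero hn (prod_ne_zero_iff.mpr fun p _ => p.succ_ne_zero)
  calc #(dedekindPsi n).primeFactors ≤ #(n * ∏ p ∈ n.primeFactors, (p + 1)).primeFactors :=
        card_le_card (Nat.primeFactors_mono (dedekindPsi_dvd n) hne)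
    _ ≤ _ := (card_primeFactors_mul_le _ _).trans
        (Nat.add_le_add_left (card_primeFactors_prod_le _ _) _)

lemma lt_card_primeFactors_or_of_lt_card_primeFactors_dedekindPsi {n : ℕ} {t : ℝ}
    (h : t + t ^ 2 < #(dedekindPsi n).primeFactors) :
    t < #n.primeFactors ∨ ∃ p ∈ n.primeFactors, t < #(p + 1).primeFactors := by
  by_contra! hle
  obtain ⟨hn, hp⟩ := hle
  have hsum : ∑ p ∈ n.primeFactors, (#(p + 1).primeFactors : ℝ) ≤ #n.primeFactors * t := by
    simpa using sum_le_sum hp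
  have hψ : (#(dedekindPsi n).primeFactors : ℝ)
      ≤ #n.primeFactors + ∑ p ∈ n.primeFactors, (#(p + 1).primeFactors : ℝ) := by
    exact_mod_cast card_primeFactors_dedekindPsi_le n
  nlinarith [(#n.primeFactors).cast_nonneg (α := ℝ)]

lemma card_filter_lt_card_primeFactors_dedekindPsi_le (N : ℕ) (t : ℝ) :
    (#{n ∈ Ioc 0 N | t + t ^ 2 < #(dedekindPsi n).primeFactors} : ℝ)
      ≤ 3 * N * ((1 + log (N + 1 : ℕ)) ^ 2 / 2 ^ t) := by
  set S := {n ∈ Ioc 0 N | t < #n.primeFactors}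
  set Q := {p ∈ Ioc 0 N | t < #(p + 1).primeFactors}
  set T := {m ∈ Ioc 0 (N + 1) | t < #m.primeFactors}
  have hT : ∑ m ∈ T, (m : ℝ)⁻¹ ≤ (1 + log (N + 1 : ℕ)) ^ 2 / 2 ^ t :=
    sum_Ioc_inv_filter_lt_card_primeFactors_le (N + 1) t
  have hsub : {n ∈ Ioc 0 N | t + t ^ 2 < #(dedekindPsi n).primeFactors}
      ⊆ {n ∈ Ioc 0 N | ∃ p ∈ S ∪ Q, p ∣ n} := by
    intro n hn
    obtain ⟨hnN, hψ⟩ := mem_filter.mp hn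
    refine mem_filter.mpr ⟨hnN, ?_⟩
    rcases lt_card_primeFactors_or_of_lt_card_primeFactors_dedekindPsi hψ with hω | ⟨p, hp, hωp⟩
    · exact ⟨n, mem_union_left _ (mem_filter.mpr ⟨hnN, hω⟩), dvd_rfl⟩
    · have hpN : p ∈ Ioc 0 N := mem_Ioc.mpr
        ⟨Nat.pos_of_mem_primeFactors hp, (Nat.le_of_mem_primeFactors hp).trans (mem_Ioc.mp hnN).2⟩
      exact ⟨p, mem_union_right _ (mem_filter.mpr ⟨hpN, hωp⟩), Nat.dvd_of_mem_primeFactors hp⟩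
  have hS : ∑ n ∈ S, (n : ℝ)⁻¹ ≤ ∑ m ∈ T, (m : ℝ)⁻¹ := by
    refine sum_le_sum_of_subset_of_nonneg ?_ fun _ _ _ => by positivity
    exact filter_subset_filter _ (Ioc_subset_Ioc_right N.le_succ)
  have hQ : ∑ p ∈ Q, (p : ℝ)⁻¹ ≤ 2 * ∑ m ∈ T, (m : ℝ)⁻¹ :=
    sum_Ioc_filter_inv_le_two_mul_sum_succ N fun m => t < #m.primeFactors
  calc (#{n ∈ Ioc 0 N | t + t ^ 2 < #(dedekindPsi n).primeFactors} : ℝ)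
      ≤ #{n ∈ Ioc 0 N | ∃ p ∈ S ∪ Q, p ∣ n} := by exact_mod_cast card_le_card hsub
    _ ≤ N * ∑ p ∈ S ∪ Q, (p : ℝ)⁻¹ := card_filter_exists_dvd_le N _
    _ ≤ N * (∑ n ∈ S, (n : ℝ)⁻¹ + ∑ p ∈ Q, (p : ℝ)⁻¹) := by
        gcongr
        rw [← sum_union_inter]
        exact le_add_of_nonneg_right (sum_nonneg fun _ _ => by positivity)
    _ ≤ N * (3 * ((1 + log (N + 1 : ℕ)) ^ 2 / 2 ^ t)) := by gcongr; linarith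
    _ = 3 * N * ((1 + log (N + 1 : ℕ)) ^ 2 / 2 ^ t) := by ring

lemma pow_three_le_two_rpow_five_mul_log {y : ℝ} (hy : 0 < y) (hL : 0 ≤ log y) :
    y ^ 3 ≤ 2 ^ (5 * log y) := by
  rw [rpow_def_of_pos two_pos, ← exp_log (pow_pos hy 3), log_pow, exp_le_exp, Nat.cast_ofNat]
  nlinarith [log_two_gt_d9]

lemma log_floor_add_one_le {x : ℝ} (hx : 1 ≤ x) : log (⌊x⌋₊ + 1 : ℕ) ≤ 1 + log x := by
  have hN : ((⌊x⌋₊ + 1 : ℕ) : ℝ) ≤ 2 * x := by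
    push_cast
    linarith [Nat.floor_le (zero_le_one.trans hx)]
  calc log (⌊x⌋₊ + 1 : ℕ) ≤ log (2 * x) := log_le_log (by positivity) hN
    _ = log 2 + log x := log_mul two_ne_zero (by positivity)
    _ ≤ 1 + log x := by linarith [log_two_lt_d9]

theorem omega_psi_bound :
    ∃ b₃ > (0 : ℝ), ∃ C > (0 : ℝ), ∀ᶠ x : ℝ in Filter.atTop,
      (((Finset.Icc 1 ⌊x⌋₊).filter (fun n : ℕ =>
          b₃ * (Real.log (Real.log x)) ^ 2 < ((dedekindPsi n).primeFactors.card : ℝ))).card : ℝ)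
        ≤ C * x / Real.log x := by
  refine ⟨30, by norm_num, 12, by norm_num, ?_⟩
  filter_upwards [eventually_ge_atTop 1, tendsto_log_atTop.eventually_ge_atTop 2,
    (tendsto_log_atTop.comp tendsto_log_atTop).eventually_ge_atTop 1] with x hx hy hL
  replace hL : 1 ≤ log (log x) := hL
  have hN : (⌊x⌋₊ : ℝ) ≤ x := Nat.floor_le (by linarith)
  have hlog := log_floor_add_one_le hx
  have hpow := pow_three_le_two_rpow_five_mul_log (y := log x) (by linarith) (by linarith)
  set y := log x
  set N := ⌊x⌋₊
  set t := 5 * log y with ht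
  have ht30 : t + t ^ 2 ≤ 30 * log y ^ 2 := by rw [ht]; nlinarith
  have hsub : {n ∈ Icc 1 N | 30 * log y ^ 2 < #(dedekindPsi n).primeFactors}
      ⊆ {n ∈ Ioc 0 N | t + t ^ 2 < #(dedekindPsi n).primeFactors} :=
    monotone_filter_right _ fun _ _ => ht30.trans_lt
  calc (#{n ∈ Icc 1 N | 30 * log y ^ 2 < #(dedekindPsi n).primeFactors} : ℝ)
      ≤ #{n ∈ Ioc 0 N | t + t ^ 2 < #(dedekindPsi n).primeFactors} := by
        exact_mod_cast card_le_card hsub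
    _ ≤ 3 * N * ((1 + log (N + 1 : ℕ)) ^ 2 / 2 ^ t) :=
        card_filter_lt_card_primeFactors_dedekindPsi_le N t
    _ ≤ 3 * x * ((2 + y) ^ 2 / y ^ 3) := by
        have hlog0 := log_natCast_nonneg (N + 1)
        gcongr ?_ * (?_ ^ 2 / ?_) <;> linarith
    _ ≤ 3 * x * ((2 * y) ^ 2 / y ^ 3) := by gcongr; linarith
    _ = 12 * x / y := by field_simp; ring
end

section
/- There exist constants b₃ > 0 and C > 0 such that, for all sufficiently large x, the number of positive integers n ≤ x with ω(φ(n)) > b₃·(log log x)² is at most C·x/log x, where ω(m) denotes the number of distinct prime factors of m. -/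
open Finset

lemma hsum (N : ℕ) : ∑ d ∈ Icc 1 N, (d:ℝ)⁻¹ ≤ 1 + Real.log N := by
  have h := harmonic_le_one_add_log N
  rw [harmonic_eq_sum_Icc] at h
  calc ∑ d ∈ Icc 1 N, (d:ℝ)⁻¹ = ((∑ d ∈ Icc 1 N, (d:ℚ)⁻¹ : ℚ) : ℝ) := by push_cast; ring
    _ ≤ 1 + Real.log N := h

lemma two_pow_omega_le {m : ℕ} (hm : m ≠ 0) : 2 ^ m.primeFactors.card ≤ m.divisors.card := by
  rw [Nat.card_divisors hm]
  rw [← Finset.prod_const]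
  exact Finset.prod_le_prod' fun p hp => by
    have : m.factorization p ≠ 0 := by
      rwa [← Finsupp.mem_support_iff, Nat.support_factorization]
    omega

lemma one_add_log_nonneg (N : ℕ) : 0 ≤ 1 + Real.log N := by
  rcases Nat.eq_zero_or_pos N with h | h
  · simp [h]
  · have : (0:ℝ) ≤ Real.log N := Real.log_nonneg (by exact_mod_cast h)
    linarith

lemma divisors_eq_filter {N m : ℕ} (h : m ∈ Icc 1 N) :
    m.divisors = (Icc 1 N).filter (· ∣ m) := by
  simp only [mem_Icc] at h
  ext d
  simp only [Nat.mem_divisors, mem_filter, mem_Icc]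
  constructor
  · rintro ⟨hd, hm⟩
    have hd1 : 1 ≤ d := by
      rcases Nat.eq_zero_or_pos d with rfl | h1
      · exact absurd (Nat.zero_dvd.mp hd) hm
      · exact h1
    exact ⟨⟨hd1, le_trans (Nat.le_of_dvd (by omega) hd) h.2⟩, hd⟩
  · rintro ⟨_, hd⟩; exact ⟨hd, by omega⟩

lemma sum_card_nat (N : ℕ) : ∑ m ∈ Icc 1 N, m.divisors.card = ∑ d ∈ Icc 1 N, N / d := by
  have h1 : ∀ m ∈ Icc 1 N, m.divisors.card = ∑ d ∈ Icc 1 N, if d ∣ m then 1 else 0 := by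
    intro m hm
    rw [divisors_eq_filter hm, Finset.card_filter]
  rw [Finset.sum_congr rfl h1, Finset.sum_comm]
  refine Finset.sum_congr rfl fun d _ => ?_
  rw [← Finset.card_filter, show Icc 1 N = Ioc 0 N from Finset.Icc_add_one_left_eq_Ioc 0 N]
  exact Nat.Ioc_filter_dvd_card_eq_div N d

lemma sum_card_le (N : ℕ) : ∑ m ∈ Icc 1 N, (m.divisors.card : ℝ) ≤ N * (1 + Real.log N) := by
  have := sum_card_nat N
  calc ∑ m ∈ Icc 1 N, (m.divisors.card : ℝ) = ((∑ m ∈ Icc 1 N, m.divisors.card : ℕ) : ℝ) := by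
        push_cast; ring
    _ = ((∑ d ∈ Icc 1 N, N / d : ℕ) : ℝ) := by rw [this]
    _ = ∑ d ∈ Icc 1 N, ((N / d : ℕ) : ℝ) := by push_cast; ring
    _ ≤ ∑ d ∈ Icc 1 N, (N : ℝ) * (d : ℝ)⁻¹ := by
        refine Finset.sum_le_sum fun d _ => ?_
        rw [mul_comm, ← div_eq_inv_mul]
        exact Nat.cast_div_le
    _ = (N : ℝ) * ∑ d ∈ Icc 1 N, (d : ℝ)⁻¹ := by rw [Finset.mul_sum]
    _ ≤ N * (1 + Real.log N) := by
        exact mul_le_mul_of_nonneg_left (hsum N) (by positivity)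

lemma filter_dvd_eq_image {N d : ℕ} (hd : 0 < d) :
    (Icc 1 N).filter (fun m => d ∣ m) = (Icc 1 (N/d)).image (fun e => d * e) := by
  ext m
  simp only [mem_filter, mem_Icc, mem_image]
  constructor
  · rintro ⟨⟨h1, h2⟩, e, rfl⟩
    refine ⟨e, ⟨?_, (Nat.le_div_iff_mul_le hd).mpr (by rw [mul_comm]; exact h2)⟩, rfl⟩
    rcases Nat.eq_zero_or_pos e with rfl | he
    · omega
    · exact he
  · rintro ⟨e, ⟨he1, he2⟩, rfl⟩
    have h3 := (Nat.le_div_iff_mul_le hd).mp he2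
    rw [mul_comm] at h3
    exact ⟨⟨Nat.mul_pos hd he1, h3⟩, ⟨e, rfl⟩⟩

lemma sum_card_div_le (N : ℕ) :
    ∑ m ∈ Icc 1 N, (m.divisors.card : ℝ) / m ≤ (1 + Real.log N)^2 := by
  have h1 : ∀ m ∈ Icc 1 N, (m.divisors.card : ℝ) / m
      = ∑ d ∈ Icc 1 N, if d ∣ m then (m:ℝ)⁻¹ else 0 := by
    intro m hm
    rw [divisors_eq_filter hm, ← Finset.sum_filter, Finset.sum_const, nsmul_eq_mul,
      div_eq_mul_inv]
  rw [Finset.sum_congr rfl h1, Finset.sum_comm]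
  have h2 : ∀ d ∈ Icc 1 N, (∑ m ∈ Icc 1 N, if d ∣ m then (m:ℝ)⁻¹ else 0)
      ≤ (d:ℝ)⁻¹ * (1 + Real.log N) := by
    intro d hd
    simp only [mem_Icc] at hd
    rw [← Finset.sum_filter, filter_dvd_eq_image (by omega),
      Finset.sum_image (fun a _ b _ h => by
        exact Nat.eq_of_mul_eq_mul_left (by omega) h)]
    have : ∑ e ∈ Icc 1 (N/d), ((d * e : ℕ):ℝ)⁻¹ = (d:ℝ)⁻¹ * ∑ e ∈ Icc 1 (N/d), (e:ℝ)⁻¹ := by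
      rw [Finset.mul_sum]
      exact Finset.sum_congr rfl fun e _ => by push_cast; rw [mul_inv]
    rw [this]
    refine mul_le_mul_of_nonneg_left ?_ (by positivity)
    refine le_trans (Finset.sum_le_sum_of_subset_of_nonneg
      (Finset.Icc_subset_Icc_right (Nat.div_le_self N d)) (fun i _ _ => by positivity)) (hsum N)
  calc _ ≤ ∑ d ∈ Icc 1 N, (d:ℝ)⁻¹ * (1 + Real.log N) := Finset.sum_le_sum h2
    _ = (∑ d ∈ Icc 1 N, (d:ℝ)⁻¹) * (1 + Real.log N) := by rw [Finset.sum_mul]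
    _ ≤ (1 + Real.log N) * (1 + Real.log N) :=
        mul_le_mul_of_nonneg_right (hsum N) (one_add_log_nonneg N)
    _ = (1 + Real.log N)^2 := by ring

lemma totient_primeFactors_subset {n : ℕ} (hn : n ≠ 0) :
    (Nat.totient n).primeFactors ⊆
      n.primeFactors ∪ n.primeFactors.biUnion (fun p => (p-1).primeFactors) := by
  intro q hq
  have hq' := Nat.prime_of_mem_primeFactors hq
  have hdvd : q ∣ Nat.totient n := Nat.dvd_of_mem_primeFactors hq
  rw [Nat.totient_eq_prod_factorization hn] at hdvd
  obtain ⟨p, hp, hpd⟩ := (Prime.dvd_finsuppProd_iff hq'.prime).mp hdvd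
  rw [Nat.support_factorization] at hp
  have hpp := Nat.prime_of_mem_primeFactors hp
  rcases (Nat.Prime.dvd_mul hq').mp hpd with h | h
  · have h1 : q ∣ p := hq'.dvd_of_dvd_pow h
    have h2 : q = p := (Nat.prime_dvd_prime_iff_eq hq' hpp).mp h1
    exact Finset.mem_union_left _ (h2 ▸ hp)
  · refine Finset.mem_union_right _ (Finset.mem_biUnion.mpr ⟨p, hp, ?_⟩)
    exact Nat.mem_primeFactors.mpr ⟨hq', h, by have := hpp.two_le; omega⟩

lemma omega_totient_le {n : ℕ} (hn : n ≠ 0) :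
    (Nat.totient n).primeFactors.card ≤
      n.primeFactors.card + ∑ p ∈ n.primeFactors, (p-1).primeFactors.card :=
  le_trans (Finset.card_le_card (totient_primeFactors_subset hn))
    (le_trans (Finset.card_union_le _ _)
      (add_le_add_right (Finset.card_biUnion_le) _))

lemma cheb_count (N k : ℕ) :
    (((Icc 1 N).filter (fun m => k < m.primeFactors.card)).card : ℝ) * (2:ℝ)^k
      ≤ N * (1 + Real.log N) := by
  calc (((Icc 1 N).filter (fun m => k < m.primeFactors.card)).card : ℝ) * (2:ℝ)^k
      = ∑ _m ∈ (Icc 1 N).filter (fun m => k < m.primeFactors.card), (2:ℝ)^k := by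
        rw [Finset.sum_const, nsmul_eq_mul]
    _ ≤ ∑ m ∈ (Icc 1 N).filter (fun m => k < m.primeFactors.card), (m.divisors.card : ℝ) := by
        refine Finset.sum_le_sum fun m hm => ?_
        simp only [mem_filter, mem_Icc] at hm
        calc (2:ℝ)^k ≤ (2:ℝ)^(m.primeFactors.card) :=
              pow_le_pow_right₀ one_le_two (le_of_lt hm.2)
          _ = ((2^(m.primeFactors.card) : ℕ) : ℝ) := by push_cast; ring
          _ ≤ (m.divisors.card : ℝ) := by
              exact_mod_cast two_pow_omega_le (by omega : m ≠ 0)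
    _ ≤ ∑ m ∈ Icc 1 N, (m.divisors.card : ℝ) :=
        Finset.sum_le_sum_of_subset_of_nonneg (Finset.filter_subset _ _)
          (fun i _ _ => by positivity)
    _ ≤ N * (1 + Real.log N) := sum_card_le N

lemma cheb_recip (N k : ℕ) :
    (∑ m ∈ (Icc 1 N).filter (fun m => k < m.primeFactors.card), (m:ℝ)⁻¹) * (2:ℝ)^k
      ≤ (1 + Real.log N)^2 := by
  calc (∑ m ∈ (Icc 1 N).filter (fun m => k < m.primeFactors.card), (m:ℝ)⁻¹) * (2:ℝ)^k
      = ∑ m ∈ (Icc 1 N).filter (fun m => k < m.primeFactors.card), (m:ℝ)⁻¹ * (2:ℝ)^k := by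
        rw [Finset.sum_mul]
    _ ≤ ∑ m ∈ (Icc 1 N).filter (fun m => k < m.primeFactors.card),
          (m.divisors.card : ℝ) / m := by
        refine Finset.sum_le_sum fun m hm => ?_
        simp only [mem_filter, mem_Icc] at hm
        rw [div_eq_mul_inv, mul_comm ((m.divisors.card : ℝ))]
        refine mul_le_mul_of_nonneg_left ?_ (by positivity)
        calc (2:ℝ)^k ≤ (2:ℝ)^(m.primeFactors.card) :=
              pow_le_pow_right₀ one_le_two (le_of_lt hm.2)
          _ = ((2^(m.primeFactors.card) : ℕ) : ℝ) := by push_cast; ring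
          _ ≤ (m.divisors.card : ℝ) := by
              exact_mod_cast two_pow_omega_le (by omega : m ≠ 0)
    _ ≤ ∑ m ∈ Icc 1 N, (m.divisors.card : ℝ) / m :=
        Finset.sum_le_sum_of_subset_of_nonneg (Finset.filter_subset _ _)
          (fun i _ _ => by positivity)
    _ ≤ (1 + Real.log N)^2 := sum_card_div_le N

open Filter Real

set_option maxHeartbeats 1000000 in
theorem omega_phi_bound :
    ∃ b₃ > (0 : ℝ), ∃ C > (0 : ℝ), ∀ᶠ x : ℝ in Filter.atTop,
      (((Finset.Icc 1 ⌊x⌋₊).filter (fun n : ℕ =>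
          b₃ * (Real.log (Real.log x)) ^ 2 < ((Nat.totient n).primeFactors.card : ℝ))).card : ℝ)
        ≤ C * x / Real.log x := by
  refine ⟨64, by norm_num, 2, by norm_num, ?_⟩
  filter_upwards [eventually_ge_atTop (Real.exp (Real.exp 2))] with x hx
  have hxpos : (0:ℝ) < x := lt_of_lt_of_le (Real.exp_pos _) hx
  set N := ⌊x⌋₊ with hN
  set R := Real.log x with hR
  set L := Real.log R with hL
  -- basic size facts
  have hexpR : Real.exp 2 ≤ R := by
    rw [hR, ← Real.log_exp (Real.exp 2)]
    exact Real.log_le_log (Real.exp_pos _) hx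
  have h4e : (4:ℝ) ≤ Real.exp 2 := by
    rw [show (2:ℝ) = 1 + 1 by norm_num, Real.exp_add]
    nlinarith [Real.add_one_le_exp 1, Real.exp_pos 1]
  have hR4 : (4:ℝ) ≤ R := le_trans h4e hexpR
  have hRpos : (0:ℝ) < R := by linarith
  have hL2 : (2:ℝ) ≤ L := by
    rw [hL, show (2:ℝ) = Real.log (Real.exp 2) from (Real.log_exp 2).symm]
    exact Real.log_le_log (Real.exp_pos 2) hexpR
  have hx1 : (1:ℝ) ≤ x := by nlinarith [Real.exp_pos (Real.exp 2), Real.add_one_le_exp (Real.exp 2), Real.exp_pos 2]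
  have hN1 : 1 ≤ N := Nat.le_floor (by exact_mod_cast hx1)
  have hNx : (N:ℝ) ≤ x := Nat.floor_le (le_of_lt hxpos)
  have hNpos : (0:ℝ) < N := by exact_mod_cast hN1
  have hlogN : Real.log N ≤ R := by rw [hR]; exact Real.log_le_log hNpos hNx
  have h1LN : 1 + Real.log N ≤ 2 * R := by linarith
  have h1LNpos := one_add_log_nonneg N
  set k := ⌈6 * L⌉₊ with hk
  have hLk : 6 * L ≤ (k:ℝ) := Nat.le_ceil _
  have hkL : (k:ℝ) ≤ 6 * L + 1 := le_of_lt (Nat.ceil_lt_add_one (by positivity))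
  have h2kpos : (0:ℝ) < (2:ℝ)^k := by positivity
  have h2k : R^4 ≤ (2:ℝ)^k := by
    have e1 : (2:ℝ)^k = Real.exp ((k:ℝ) * Real.log 2) := by
      rw [Real.exp_nat_mul, Real.exp_log (by norm_num : (0:ℝ) < 2)]
    have e2 : R^4 = Real.exp (((4:ℕ):ℝ) * L) := by
      rw [Real.exp_nat_mul, Real.exp_log hRpos]
    rw [e1, e2]
    push_cast
    refine Real.exp_le_exp.mpr ?_
    nlinarith [Real.log_two_gt_d9]
  -- the exceptional sets
  set A := (Icc 1 N).filter (fun m => k < m.primeFactors.card) with hA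
  set B := (Icc 1 N).filter
    (fun n => ∃ p ∈ n.primeFactors, k < (p-1).primeFactors.card) with hB
  -- the target set is inside A ∪ B
  have hsub : (Icc 1 N).filter (fun n : ℕ =>
      64 * L ^ 2 < ((Nat.totient n).primeFactors.card : ℝ)) ⊆ A ∪ B := by
    intro n hn
    simp only [mem_filter, mem_Icc] at hn
    by_contra hcon
    simp only [Finset.mem_union, hA, hB, mem_filter, mem_Icc, not_or, not_lt,
      not_exists, not_and] at hcon
    have hωn : n.primeFactors.card ≤ k := hcon.1 ⟨hn.1.1, hn.1.2⟩
    have hbadp : ∀ p ∈ n.primeFactors, (p-1).primeFactors.card ≤ k := by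
      intro p hp
      exact hcon.2 ⟨hn.1.1, hn.1.2⟩ p hp
    have hnz : n ≠ 0 := by omega
    have h1 : (Nat.totient n).primeFactors.card ≤ k + k * k := by
      refine le_trans (omega_totient_le hnz) ?_
      have : ∑ p ∈ n.primeFactors, (p-1).primeFactors.card ≤ n.primeFactors.card * k :=
        Finset.sum_le_card_nsmul _ _ k hbadp
      have h2 : n.primeFactors.card * k ≤ k * k := Nat.mul_le_mul_right k hωn
      omega
    have h2 : ((Nat.totient n).primeFactors.card : ℝ) ≤ (k:ℝ) + (k:ℝ) * (k:ℝ) := by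
      exact_mod_cast h1
    have := hn.2
    nlinarith
  -- bound card A
  have hcA : (A.card : ℝ) * R ≤ x / 2 := by
    have h1 := cheb_count N k
    have h2 : (A.card : ℝ) * (2:ℝ)^k ≤ x * (2 * R) := by
      refine le_trans h1 ?_
      exact mul_le_mul hNx h1LN h1LNpos (le_of_lt hxpos)
    have h3 : (A.card : ℝ) * R^4 ≤ x * (2 * R) :=
      le_trans (mul_le_mul_of_nonneg_left h2k (by positivity)) h2
    refine le_of_mul_le_mul_right ?_ (show (0:ℝ) < R^3 by positivity)
    calc (A.card:ℝ) * R * R^3 = (A.card:ℝ) * R^4 := by ring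
      _ ≤ x * (2*R) := h3
      _ ≤ x / 2 * R^3 := by nlinarith [mul_nonneg (mul_pos hxpos hRpos).le (show (0:ℝ) ≤ R^2 - 4 by nlinarith [hR4])]
  -- bound card B
  have hcB : (B.card : ℝ) * R ≤ x := by
    set P := (Icc 1 N).filter (fun p => Nat.Prime p ∧ k < (p-1).primeFactors.card) with hP
    have hBsub : B ⊆ P.biUnion (fun p => (Icc 1 N).filter (fun m => p ∣ m)) := by
      intro n hn
      simp only [hB, mem_filter, mem_Icc] at hn
      obtain ⟨⟨hn1, hn2⟩, p, hp, hpk⟩ := hn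
      have hpp := Nat.prime_of_mem_primeFactors hp
      have hpd := Nat.dvd_of_mem_primeFactors hp
      refine Finset.mem_biUnion.mpr ⟨p, ?_, ?_⟩
      · simp only [hP, mem_filter, mem_Icc]
        exact ⟨⟨hpp.one_lt.le.trans' (by norm_num),
          le_trans (Nat.le_of_dvd (by omega) hpd) hn2⟩, hpp, hpk⟩
      · simp only [mem_filter, mem_Icc]
        exact ⟨⟨hn1, hn2⟩, hpd⟩
    have hcard1 : B.card ≤ ∑ p ∈ P, N / p :=
      le_trans (Finset.card_le_card hBsub)
        (le_trans (Finset.card_biUnion_le) (by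
          refine Finset.sum_le_sum fun p _ => ?_
          rw [show Icc 1 N = Ioc 0 N from Finset.Icc_add_one_left_eq_Ioc 0 N]
          exact le_of_eq (Nat.Ioc_filter_dvd_card_eq_div N p)))
    have hsumP : ∑ p ∈ P, (p:ℝ)⁻¹ ≤
        ∑ m ∈ (Icc 1 N).filter (fun m => k < m.primeFactors.card), (m:ℝ)⁻¹ := by
      have hinj : ∀ a ∈ P, ∀ b ∈ P, a - 1 = b - 1 → a = b := by
        intro a ha b hb hab
        simp only [hP, mem_filter, mem_Icc] at ha hb
        omega
      have himg : P.image (fun p => p - 1) ⊆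
          (Icc 1 N).filter (fun m => k < m.primeFactors.card) := by
        intro m hm
        simp only [Finset.mem_image] at hm
        obtain ⟨p, hp, rfl⟩ := hm
        simp only [hP, mem_filter, mem_Icc] at hp
        have := hp.2.1.two_le
        simp only [mem_filter, mem_Icc]
        exact ⟨⟨by omega, by omega⟩, hp.2.2⟩
      have step1 : ∑ p ∈ P, (p:ℝ)⁻¹ ≤ ∑ p ∈ P, (fun m : ℕ => ((m:ℝ))⁻¹) (p - 1) := by
        refine Finset.sum_le_sum fun p hp => ?_
        simp only [hP, mem_filter, mem_Icc] at hp
        have h2 := hp.2.1.two_le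
        refine inv_anti₀ ?_ ?_
        · exact_mod_cast (show 0 < p - 1 by omega)
        · exact_mod_cast (show p - 1 ≤ p by omega)
      have step2 : ∑ m ∈ P.image (fun p => p - 1), (fun m : ℕ => ((m:ℝ))⁻¹) m
          = ∑ p ∈ P, (fun m : ℕ => ((m:ℝ))⁻¹) (p - 1) := Finset.sum_image hinj
      have step3 : ∑ m ∈ P.image (fun p => p - 1), (fun m : ℕ => ((m:ℝ))⁻¹) m
          ≤ ∑ m ∈ (Icc 1 N).filter (fun m => k < m.primeFactors.card), (m:ℝ)⁻¹ :=
        Finset.sum_le_sum_of_subset_of_nonneg himg (fun i _ _ => by positivity)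
      exact le_trans step1 (le_trans (le_of_eq step2.symm) step3)
    have hrec := cheb_recip N k
    have hsum2 : (∑ p ∈ P, (p:ℝ)⁻¹) * (2:ℝ)^k ≤ (2*R)^2 := by
      refine le_trans (mul_le_mul_of_nonneg_right hsumP (le_of_lt h2kpos)) ?_
      refine le_trans hrec ?_
      nlinarith
    have hsum3 : (∑ p ∈ P, (p:ℝ)⁻¹) * R^4 ≤ 4*R^2 := by
      have hnn : (0:ℝ) ≤ ∑ p ∈ P, (p:ℝ)⁻¹ :=
        Finset.sum_nonneg fun p _ => by positivity
      nlinarith [mul_le_mul_of_nonneg_left h2k hnn]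
    have hcard2 : (B.card : ℝ) ≤ (N:ℝ) * ∑ p ∈ P, (p:ℝ)⁻¹ := by
      calc (B.card : ℝ) ≤ ((∑ p ∈ P, N / p : ℕ) : ℝ) := by exact_mod_cast hcard1
        _ = ∑ p ∈ P, ((N / p : ℕ) : ℝ) := by push_cast; ring
        _ ≤ ∑ p ∈ P, (N:ℝ) * (p:ℝ)⁻¹ := by
            refine Finset.sum_le_sum fun p _ => ?_
            rw [mul_comm, ← div_eq_inv_mul]
            exact Nat.cast_div_le
        _ = (N:ℝ) * ∑ p ∈ P, (p:ℝ)⁻¹ := by rw [Finset.mul_sum]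
    have hRne : R ≠ 0 := ne_of_gt hRpos
    have hsP : ∑ p ∈ P, (p:ℝ)⁻¹ ≤ 4 / R^2 := by
      refine le_of_mul_le_mul_right ?_ (show (0:ℝ) < R^4 by positivity)
      calc (∑ p ∈ P, (p:ℝ)⁻¹) * R^4 ≤ 4 * R^2 := hsum3
        _ = 4 / R^2 * R^4 := by field_simp
    calc (B.card : ℝ) * R ≤ ((N:ℝ) * (4 / R^2)) * R := by
          refine mul_le_mul_of_nonneg_right (le_trans hcard2 ?_) (le_of_lt hRpos)
          exact mul_le_mul_of_nonneg_left hsP (le_of_lt hNpos)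
      _ = 4 * (N:ℝ) / R := by field_simp
      _ ≤ x := by
          rw [div_le_iff₀ hRpos]
          nlinarith [hNx, hR4, hxpos]
  -- combine
  set F := (Icc 1 N).filter (fun n : ℕ =>
      64 * L ^ 2 < ((Nat.totient n).primeFactors.card : ℝ)) with hF
  have hcard : F.card ≤ A.card + B.card :=
    le_trans (Finset.card_le_card hsub) (Finset.card_union_le _ _)
  have hfin : (F.card : ℝ) * R ≤ 2 * x := by
    calc (F.card : ℝ) * R ≤ ((A.card : ℝ) + (B.card : ℝ)) * R := by
          refine mul_le_mul_of_nonneg_right ?_ (le_of_lt hRpos)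
          exact_mod_cast hcard
      _ = (A.card : ℝ) * R + (B.card : ℝ) * R := by ring
      _ ≤ x / 2 + x := add_le_add hcA hcB
      _ ≤ 2 * x := by linarith
  rw [le_div_iff₀ hRpos]
  exact hfin
end
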